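/- Let m ≥ 1, let H_m = {diag(ξ_m^k, ξ_m^l, ξ_m^{-k-l}) : k, l ∈ ℤ} ≤ SL(3,ℂ), let T = [[0,1,0],[0,0,1],[1,0,0]] and let R = [[-1,0,0],[0,0,-1],[0,-1,0]] (both in SL(3,ℂ)). Let G_m^6 be the subgroup of SL(3,ℂ) generated by H_m, T and R. Then the subgroup ⟨T, R⟩ is isomorphic to the symmetric group S_3, H_m is normal in G_m^6, H_m ∩ ⟨T,R⟩ = {1}, G_m^6 = H_m·⟨T,R⟩ is the internal semidirect product of ⟨T,R⟩ acting on H_m, and G_m^6 has order 6m². -/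

import Mathlib

noncomputable section

/-- The primitive root of unity `exp(2πi/n)`. -/
def ξ (n : ℕ) : ℂ := Complex.exp (2 * Real.pi * Complex.I / n)

/-- The element `diag(ξ_m^k, ξ_m^l, ξ_m^{-k-l})` of `SL(3,ℂ)`. -/
def diagSL (m : ℕ) (k l : ℤ) : Matrix.SpecialLinearGroup (Fin 3) ℂ :=
  ⟨Matrix.diagonal ![ξ m ^ k, ξ m ^ l, ξ m ^ (-k - l)], by
    have h : ξ m ≠ 0 := Complex.exp_ne_zero _
    rw [Matrix.det_diagonal, Fin.prod_univ_three]
    simp only [Matrix.cons_val_zero, Matrix.cons_val_one, Matrix.head_cons,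
      Matrix.cons_val_two, Matrix.tail_cons, ← zpow_add₀ h]
    norm_num⟩

lemma diagSL_coe (m : ℕ) (k l : ℤ) : (diagSL m k l : Matrix (Fin 3) (Fin 3) ℂ)
    = Matrix.diagonal ![ξ m ^ k, ξ m ^ l, ξ m ^ (-k - l)] := rfl

lemma diagSL_mul (m : ℕ) (k l k' l' : ℤ) :
    diagSL m k l * diagSL m k' l' = diagSL m (k + k') (l + l') := by
  have h : ξ m ≠ 0 := Complex.exp_ne_zero _
  have hv : (fun i => ![ξ m ^ k, ξ m ^ l, ξ m ^ (-k - l)] i *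
        ![ξ m ^ k', ξ m ^ l', ξ m ^ (-k' - l')] i)
      = ![ξ m ^ (k + k'), ξ m ^ (l + l'), ξ m ^ (-(k + k') - (l + l'))] := by
    funext i
    fin_cases i <;> simp [← zpow_add₀ h] <;> (congr 1; ring)
  apply Subtype.ext
  rw [Matrix.SpecialLinearGroup.coe_mul, diagSL_coe, diagSL_coe, diagSL_coe,
    Matrix.diagonal_mul_diagonal, hv]

lemma diagSL_one (m : ℕ) : diagSL m 0 0 = 1 := by
  apply Subtype.ext
  rw [diagSL_coe, Matrix.SpecialLinearGroup.coe_one]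
  rw [show ![ξ m ^ (0:ℤ), ξ m ^ (0:ℤ), ξ m ^ (-(0:ℤ) - 0)] = fun _ => 1 by
    funext i; fin_cases i <;> simp]
  exact Matrix.diagonal_one

lemma diagSL_inv (m : ℕ) (k l : ℤ) : (diagSL m k l)⁻¹ = diagSL m (-k) (-l) := by
  apply inv_eq_of_mul_eq_one_right
  rw [diagSL_mul]
  simp [diagSL_one]

/-- The abelian subgroup `H_m = {diag(ξ_m^k, ξ_m^l, ξ_m^{-k-l}) : k, l ∈ ℤ}` of `SL(3,ℂ)`. -/
def Hm (m : ℕ) : Subgroup (Matrix.SpecialLinearGroup (Fin 3) ℂ) where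
  carrier := { g | ∃ k l : ℤ, g = diagSL m k l }
  one_mem' := ⟨0, 0, (diagSL_one m).symm⟩
  mul_mem' := by
    rintro a b ⟨k, l, rfl⟩ ⟨k', l', rfl⟩
    exact ⟨k + k', l + l', diagSL_mul m k l k' l'⟩
  inv_mem' := by
    rintro a ⟨k, l, rfl⟩
    exact ⟨-k, -l, diagSL_inv m k l⟩

/-- The permutation matrix `T`. -/
def Tm : Matrix.SpecialLinearGroup (Fin 3) ℂ :=
  ⟨!![0, 1, 0; 0, 0, 1; 1, 0, 0], by norm_num [Matrix.det_fin_three, Matrix.cons_val_two]⟩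

/-- The matrix `R = [[-1,0,0],[0,0,-1],[0,-1,0]]`. -/
def Rm : Matrix.SpecialLinearGroup (Fin 3) ℂ :=
  ⟨!![-1, 0, 0; 0, 0, -1; 0, -1, 0], by norm_num [Matrix.det_fin_three, Matrix.cons_val_two]⟩

/-- `G_m^6`, the subgroup of `SL(3,ℂ)` generated by `H_m`, `T` and `R`. -/
def Gm6 (m : ℕ) : Subgroup (Matrix.SpecialLinearGroup (Fin 3) ℂ) :=
  Subgroup.closure ((Hm m : Set (Matrix.SpecialLinearGroup (Fin 3) ℂ)) ∪ {Tm, Rm})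

/-!
`⟨T, R⟩` is the image of `S₃` under the signed permutation representation
`σ ↦ sign σ • P_σ`, which is faithful and, `3` being odd, lands in `SL₃`; `T` and `R` are the
images of a `3`-cycle and an adjacent transposition, which generate `S₃`. Conjugating a diagonal
matrix by a signed permutation matrix permutes its diagonal entries, so `⟨T, R⟩` normalizes `H_m`;
and a signed permutation matrix is diagonal only for `σ = 1`, so `H_m ∩ ⟨T, R⟩ = 1`. Hence every
element of `G_m^6` factors uniquely as `h * t`, and `|G_m^6| = |H_m| * 6 = 6 m²`, where `H_m ≅ (ℤ/m)²`
because `ξ_m` is a primitive `m`-th root of unity.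
-/

open Matrix Equiv
open scoped Pointwise

local notation "SL₃" => SpecialLinearGroup (Fin 3) ℂ

section SignedPerm

variable {n : Type*} [Fintype n] [DecidableEq n] (R : Type*) [CommRing R]

/-- `permMatrix` is anti-multiplicative, hence the inverse. -/
def signedPermMatrix (σ : Perm n) : Matrix n n R :=
  ((Perm.sign σ : ℤ) : R) • σ⁻¹.permMatrix R

variable {R}

lemma signedPermMatrix_apply (σ : Perm n) (i j : n) :
    signedPermMatrix R σ i j = if σ j = i then ((Perm.sign σ : ℤ) : R) else 0 := by
  simp [signedPermMatrix, PEquiv.toMatrix_apply, Equiv.eq_symm_apply, eq_comm]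

lemma signedPermMatrix_mul (σ τ : Perm n) :
    signedPermMatrix R (σ * τ) = signedPermMatrix R σ * signedPermMatrix R τ := by
  simp only [signedPermMatrix, _root_.mul_inv_rev, permMatrix_mul, map_mul, Units.val_mul,
    Int.cast_mul, smul_mul_smul_comm]

lemma det_signedPermMatrix (hn : Odd (Fintype.card n)) (σ : Perm n) :
    det (signedPermMatrix R σ) = 1 := by
  rw [signedPermMatrix, det_smul, det_permutation, Perm.sign_inv]
  rcases Int.units_eq_one_or (Perm.sign σ) with h | h <;> simp [h, hn.neg_one_pow]

lemma signedPermMatrix_mul_diagonal (σ : Perm n) (d : n → R) :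
    signedPermMatrix R σ * diagonal d = diagonal (d ∘ σ.symm) * signedPermMatrix R σ := by
  ext i j
  rw [mul_diagonal, diagonal_mul, signedPermMatrix_apply]
  split_ifs with h
  · simp [← h, mul_comm]
  · simp

lemma eq_one_of_isDiag_signedPermMatrix [Nontrivial R] {σ : Perm n}
    (hσ : (signedPermMatrix R σ).IsDiag) : σ = 1 := by
  ext j
  by_contra hj
  have : signedPermMatrix R σ (σ j) j = 0 := hσ hj
  rw [signedPermMatrix_apply, if_pos rfl] at this
  rcases Int.units_eq_one_or (Perm.sign σ) with h | h <;> simp [h] at this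

variable (R) in
def signedPermHom (hn : Odd (Fintype.card n)) : Perm n →* SpecialLinearGroup n R where
  toFun σ := ⟨signedPermMatrix R σ, det_signedPermMatrix hn σ⟩
  map_one' := by ext1; simp [signedPermMatrix]
  map_mul' σ τ := Subtype.ext (signedPermMatrix_mul σ τ)

lemma coe_signedPermHom (hn : Odd (Fintype.card n)) (σ : Perm n) :
    (signedPermHom R hn σ : Matrix n n R) = signedPermMatrix R σ := rfl

lemma signedPermHom_injective [Nontrivial R] (hn : Odd (Fintype.card n)) :
    Function.Injective (signedPermHom R hn) := by
  refine (injective_iff_map_eq_one _).mpr fun σ hσ => eq_one_of_isDiag_signedPermMatrix (R := R) ?_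
  have h : signedPermMatrix R σ = 1 := congrArg Subtype.val hσ
  exact h ▸ isDiag_one

end SignedPerm

def signedPermSL3 : Perm (Fin 3) →* SL₃ :=
  signedPermHom ℂ (by decide)

lemma Tm_eq_signedPermSL3 : Tm = signedPermSL3 (finRotate 3)⁻¹ := by
  ext i j
  rw [signedPermSL3, coe_signedPermHom, signedPermMatrix_apply]
  fin_cases i <;> fin_cases j <;> simp [Tm, sign_finRotate] <;> decide

lemma Rm_eq_signedPermSL3 : Rm = signedPermSL3 (swap 2 1) := by
  ext i j
  rw [signedPermSL3, coe_signedPermHom, signedPermMatrix_apply]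
  fin_cases i <;> fin_cases j <;> simp [Rm] <;> decide

lemma closure_finRotate_inv_swap :
    Subgroup.closure {(finRotate 3)⁻¹, swap 2 1} = (⊤ : Subgroup (Perm (Fin 3))) := by
  have h := Perm.closure_cycle_adjacent_swap (isCycle_finRotate (n := 1)).inv
    (by rw [Perm.support_inv, support_finRotate]) 2
  rwa [show (finRotate 3)⁻¹ 2 = 1 by decide] at h

lemma range_signedPermSL3 : signedPermSL3.range = Subgroup.closure {Tm, Rm} := by
  rw [MonoidHom.range_eq_map, ← closure_finRotate_inv_swap, MonoidHom.map_closure,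
    Set.image_pair, ← Tm_eq_signedPermSL3, ← Rm_eq_signedPermSL3]

def closureTRMulEquivPerm : Subgroup.closure {Tm, Rm} ≃* Perm (Fin 3) :=
  (MulEquiv.subgroupCongr range_signedPermSL3.symm).trans
    (MonoidHom.ofInjective (signedPermHom_injective _)).symm

lemma card_closureTR : Nat.card (Subgroup.closure {Tm, Rm}) = 6 := by
  rw [Nat.card_congr closureTRMulEquivPerm.toEquiv, Nat.card_perm, Nat.card_fin]
  rfl

lemma coe_Hm (m : ℕ) :
    (Hm m : Set SL₃) = Set.range fun p : ℤ × ℤ => diagSL m p.1 p.2 := by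
  ext g
  exact ⟨fun ⟨k, l, hg⟩ => ⟨(k, l), hg.symm⟩, fun ⟨p, hp⟩ => ⟨p.1, p.2, hp.symm⟩⟩

lemma mem_normalizer_Hm_of_conj {m : ℕ} {g : SL₃} (f : ℤ × ℤ → ℤ × ℤ)
    (hf : Function.Surjective f)
    (hg : ∀ k l, g * diagSL m k l * g⁻¹ = diagSL m (f (k, l)).1 (f (k, l)).2) :
    g ∈ Subgroup.normalizer (Hm m : Set SL₃) := by
  have hconj : (MulAut.conj g ∘ fun p : ℤ × ℤ => diagSL m p.1 p.2)
      = (fun p : ℤ × ℤ => diagSL m p.1 p.2) ∘ f := funext fun p => hg p.1 p.2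
  rw [Subgroup.mem_normalizer_iff_conj_image_eq, coe_Hm, ← Set.range_comp, hconj,
    Set.range_comp, hf.range_eq, Set.image_univ]

lemma signedPermSL3_mul_diagSL {m : ℕ} (σ : Perm (Fin 3)) {k l k' l' : ℤ}
    (h : ![ξ m ^ k, ξ m ^ l, ξ m ^ (-k - l)] ∘ σ.symm = ![ξ m ^ k', ξ m ^ l', ξ m ^ (-k' - l')]) :
    signedPermSL3 σ * diagSL m k l = diagSL m k' l' * signedPermSL3 σ :=
  Subtype.ext <| (signedPermMatrix_mul_diagonal σ _).trans (by rw [h]; rfl)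

lemma Tm_conj_diagSL (m : ℕ) (k l : ℤ) : Tm * diagSL m k l * Tm⁻¹ = diagSL m l (-k - l) := by
  rw [mul_inv_eq_iff_eq_mul, Tm_eq_signedPermSL3]
  refine signedPermSL3_mul_diagSL _ (funext fun i => ?_)
  fin_cases i <;> simp [Perm.inv_def]
  ring_nf

lemma Rm_conj_diagSL (m : ℕ) (k l : ℤ) : Rm * diagSL m k l * Rm⁻¹ = diagSL m k (-k - l) := by
  rw [mul_inv_eq_iff_eq_mul, Rm_eq_signedPermSL3]
  refine signedPermSL3_mul_diagSL _ (funext fun i => ?_)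
  fin_cases i <;> simp [swap_apply_of_ne_of_ne]

lemma closureTR_le_normalizer_Hm (m : ℕ) :
    Subgroup.closure {Tm, Rm} ≤ Subgroup.normalizer (Hm m : Set SL₃) := by
  rw [Subgroup.closure_le, Set.pair_subset_iff]
  constructor
  · refine mem_normalizer_Hm_of_conj (fun p => (p.2, -p.1 - p.2))
      (fun p => ⟨(-p.1 - p.2, p.1), by ext <;> simp⟩) (Tm_conj_diagSL m)
  · refine mem_normalizer_Hm_of_conj (fun p => (p.1, -p.1 - p.2))
      (Function.Involutive.surjective fun p => by ext <;> simp) (Rm_conj_diagSL m)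

lemma Hm_inf_closureTR (m : ℕ) : Hm m ⊓ Subgroup.closure {Tm, Rm} = ⊥ := by
  rw [eq_bot_iff]
  rintro g ⟨⟨k, l, rfl⟩, hg⟩
  rw [← range_signedPermSL3] at hg
  obtain ⟨σ, hσ⟩ := hg
  have hdiag : signedPermMatrix ℂ σ = diagonal _ := congrArg Subtype.val hσ
  have hσ1 : σ = 1 := eq_one_of_isDiag_signedPermMatrix (R := ℂ) (hdiag ▸ isDiag_diagonal _)
  rw [Subgroup.mem_bot, ← hσ, hσ1, map_one]

lemma Hm_sup_closureTR (m : ℕ) : Hm m ⊔ Subgroup.closure {Tm, Rm} = Gm6 m := by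
  rw [Gm6, Subgroup.closure_union, Subgroup.closure_eq]

lemma coe_Gm6 (m : ℕ) :
    (Gm6 m : Set SL₃) = (Hm m : Set SL₃) * (Subgroup.closure {Tm, Rm} : Set SL₃) := by
  rw [← Hm_sup_closureTR, Subgroup.coe_mul_of_right_le_normalizer_left _ _
    (closureTR_le_normalizer_Hm m)]

lemma Gm6_le_normalizer_Hm (m : ℕ) :
    Gm6 m ≤ Subgroup.normalizer (Hm m : Set SL₃) :=
  Hm_sup_closureTR m ▸ sup_le Subgroup.le_normalizer (closureTR_le_normalizer_Hm m)

lemma isPrimitiveRoot_ξ {m : ℕ} (hm : m ≠ 0) : IsPrimitiveRoot (ξ m) m :=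
  Complex.isPrimitiveRoot_exp m hm

lemma ξ_zpow_eq_ξ_zpow_iff {m : ℕ} (hm : m ≠ 0) (k k' : ℤ) :
    ξ m ^ k = ξ m ^ k' ↔ (k : ZMod m) = k' := by
  have hξ : ξ m ≠ 0 := Complex.exp_ne_zero _
  rw [ZMod.intCast_eq_intCast_iff_dvd_sub, ← (isPrimitiveRoot_ξ hm).zpow_eq_one_iff_dvd,
    zpow_sub₀ hξ, div_eq_one_iff_eq (zpow_ne_zero _ hξ), eq_comm]

lemma diagSL_eq_diagSL_iff {m : ℕ} (hm : m ≠ 0) {k l k' l' : ℤ} :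
    diagSL m k l = diagSL m k' l' ↔ (k : ZMod m) = k' ∧ (l : ZMod m) = l' := by
  simp only [← ξ_zpow_eq_ξ_zpow_iff hm]
  constructor
  · intro h
    exact ⟨by simpa [diagSL_coe] using congrArg (fun g => g 0 0) h,
      by simpa [diagSL_coe] using congrArg (fun g => g 1 1) h⟩
  · rintro ⟨hk, hl⟩
    have hkl : ξ m ^ (-k - l) = ξ m ^ (-k' - l') := by
      rw [ξ_zpow_eq_ξ_zpow_iff hm] at hk hl ⊢
      push_cast
      rw [hk, hl]
    apply Subtype.ext
    rw [diagSL_coe, diagSL_coe, hk, hl, hkl]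

lemma card_Hm {m : ℕ} (hm : m ≠ 0) : Nat.card (Hm m) = m ^ 2 := by
  have : NeZero m := ⟨hm⟩
  have hcast (a : ZMod m) : (((a.val : ℤ) : ZMod m)) = a := by simp
  set F : ZMod m × ZMod m → SL₃ := fun p => diagSL m p.1.val p.2.val
  have hinj : Function.Injective F := fun p q h => by
    rw [diagSL_eq_diagSL_iff hm, hcast, hcast, hcast, hcast] at h
    exact Prod.ext h.1 h.2
  have hfactor : (fun p : ℤ × ℤ => diagSL m p.1 p.2) = F ∘ Prod.map (↑) (↑) :=
    funext fun p => (diagSL_eq_diagSL_iff hm).mpr (by simp)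
  have hrange : (Hm m : Set SL₃) = Set.range F := by
    rw [coe_Hm, hfactor, Set.range_comp,
      (ZMod.intCast_surjective.prodMap ZMod.intCast_surjective).range_eq, Set.image_univ]
  rw [← SetLike.coe_sort_coe, hrange, Nat.card_range_of_injective hinj, Nat.card_prod,
    Nat.card_zmod, sq]

lemma card_Gm6 {m : ℕ} (hm : m ≠ 0) : Nat.card (Gm6 m) = 6 * m ^ 2 := by
  have hinj := Subgroup.mul_injective_of_disjoint (disjoint_iff.mpr (Hm_inf_closureTR m))
  have hrange : Set.range (fun g : Hm m × Subgroup.closure {Tm, Rm} => (g.1 : SL₃) * g.2)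
      = Gm6 m := by
    ext g
    simp [coe_Gm6, Set.mem_mul]
  rw [← SetLike.coe_sort_coe, ← hrange, Nat.card_range_of_injective hinj, Nat.card_prod,
    card_Hm hm, card_closureTR, mul_comm]

theorem Gm6_semidirect_structure (m : ℕ) (hm : 1 ≤ m) :
    Nonempty ((Subgroup.closure {Tm, Rm}) ≃* Equiv.Perm (Fin 3)) ∧
    ((Hm m).subgroupOf (Gm6 m)).Normal ∧
    Hm m ⊓ Subgroup.closure {Tm, Rm} = ⊥ ∧
    Hm m ⊔ Subgroup.closure {Tm, Rm} = Gm6 m ∧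
    (∀ g ∈ Gm6 m, ∃ h ∈ Hm m, ∃ t ∈ Subgroup.closure {Tm, Rm}, g = h * t) ∧
    Nat.card (Gm6 m) = 6 * m ^ 2 := by
  refine ⟨⟨closureTRMulEquivPerm⟩, ?_, Hm_inf_closureTR m, Hm_sup_closureTR m, fun g hg => ?_,
    card_Gm6 (by omega)⟩
  · exact (Subgroup.normal_subgroupOf_iff_le_normalizer
      (Hm_sup_closureTR m ▸ le_sup_left)).mpr (Gm6_le_normalizer_Hm m)
  · rw [← SetLike.mem_coe, coe_Gm6] at hg
    obtain ⟨h, hh, t, ht, rfl⟩ := hg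
    exact ⟨h, hh, t, ht, rfl⟩

end
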